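/- Let Ω ⊆ ℝ³ = ℝ_t × ℝ²_x be open and let n, γ, β¹, β², h : Ω → ℝ be C² functions with n > 0. Let g^{αβ} denote the inverse-metric components g^{tt} = −1/n², g^{ti} = g^{it} = β^i/n², g^{ij} = e^{−2γ} δ^{ij} − β^i β^j/n² for i,j ∈ {1,2}, and set e₀ = ∂_t − β¹∂₁ − β²∂₂. Assume the elliptic-gauge identity 2 e₀ γ = ∂₁β¹ + ∂₂β² holds on Ω. Then the wave operator □_g h := (n e^{2γ})^{−1} Σ_{α,β ∈ {t,1,2}} ∂_α ( n e^{2γ} g^{αβ} ∂_β h ) satisfies, at every point of Ω: □_g h = −(1/n²) e₀(e₀ h) + e^{−2γ} (∂²₁₁ h + ∂²₂₂ h) + (e₀ n / n³) e₀ h + (e^{−2γ}/n) (∂₁n ∂₁h + ∂₂n ∂₂h). -/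

import Mathlib

noncomputable section

abbrev E3 := EuclideanSpace ℝ (Fin 3)

/-- Partial derivative in the `α`-th coordinate direction (coordinate `0` is `t`). -/
def pd3 (α : Fin 3) (f : E3 → ℝ) : E3 → ℝ :=
  fun x => fderiv ℝ f x (EuclideanSpace.single α 1)

section aux
variable {x : E3}

lemma pd3_congr {f g : E3 → ℝ} (hfg : f =ᶠ[nhds x] g) (α : Fin 3) :
    pd3 α f x = pd3 α g x := by
  unfold pd3; rw [hfg.fderiv_eq]

lemma pd3_neg {f : E3 → ℝ} (α : Fin 3) :
    pd3 α (fun y => -(f y)) x = -(pd3 α f x) := by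
  unfold pd3; rw [fderiv_fun_neg]; simp

lemma pd3_sub {f g : E3 → ℝ} (hf : DifferentiableAt ℝ f x) (hg : DifferentiableAt ℝ g x)
    (α : Fin 3) : pd3 α (fun y => f y - g y) x = pd3 α f x - pd3 α g x := by
  unfold pd3; rw [fderiv_fun_sub hf hg]; simp

lemma pd3_mul {f g : E3 → ℝ} (hf : DifferentiableAt ℝ f x) (hg : DifferentiableAt ℝ g x)
    (α : Fin 3) : pd3 α (fun y => f y * g y) x = pd3 α f x * g x + f x * pd3 α g x := by
  unfold pd3; rw [fderiv_fun_mul hf hg]; simp; ring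

lemma pd3_mul3 {a b c : E3 → ℝ} (ha : DifferentiableAt ℝ a x) (hb : DifferentiableAt ℝ b x)
    (hc : DifferentiableAt ℝ c x) (α : Fin 3) :
    pd3 α (fun y => a y * b y * c y) x =
      pd3 α a x * b x * c x + a x * pd3 α b x * c x + a x * b x * pd3 α c x := by
  rw [pd3_mul (ha.fun_mul hb) hc, pd3_mul ha hb]; ring

lemma pd3_mul4 {a b c d : E3 → ℝ} (ha : DifferentiableAt ℝ a x) (hb : DifferentiableAt ℝ b x)
    (hc : DifferentiableAt ℝ c x) (hd : DifferentiableAt ℝ d x) (α : Fin 3) :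
    pd3 α (fun y => a y * b y * c y * d y) x =
      pd3 α a x * b x * c x * d x + a x * pd3 α b x * c x * d x
      + a x * b x * pd3 α c x * d x + a x * b x * c x * pd3 α d x := by
  rw [pd3_mul ((ha.fun_mul hb).fun_mul hc) hd, pd3_mul3 ha hb hc]; ring

lemma pd3_exp2 {γ : E3 → ℝ} (hγ : DifferentiableAt ℝ γ x) (α : Fin 3) :
    pd3 α (fun y => Real.exp (2 * γ y)) x
      = 2 * pd3 α γ x * Real.exp (2 * γ x) := by
  unfold pd3
  rw [fderiv_exp (by fun_prop)]
  rw [fderiv_const_mul hγ]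
  simp; ring

lemma pd3_inv {n : E3 → ℝ} (hn : DifferentiableAt ℝ n x) (hx : n x ≠ 0) (α : Fin 3) :
    pd3 α (fun y => (n y)⁻¹) x = -(pd3 α n x / (n x) ^ 2) := by
  unfold pd3
  have : HasFDerivAt (fun y => (n y)⁻¹) (-((n x)^2)⁻¹ • fderiv ℝ n x) x :=
    (hasDerivAt_inv hx).comp_hasFDerivAt x hn.hasFDerivAt
  rw [this.fderiv]
  simp
  field_simp

lemma diff_pd3 {f : E3 → ℝ} (hf : ContDiffAt ℝ 2 f x) (β : Fin 3) :
    DifferentiableAt ℝ (pd3 β f) x := by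
  have h1 : DifferentiableAt ℝ (fderiv ℝ f) x :=
    (hf.fderiv_right (m := 1) le_rfl).differentiableAt one_ne_zero
  exact h1.clm_apply (differentiableAt_const _)

lemma pd3_symm {f : E3 → ℝ} (hf : ContDiffAt ℝ 2 f x) (α β : Fin 3) :
    pd3 α (pd3 β f) x = pd3 β (pd3 α f) x := by
  have h1 : DifferentiableAt ℝ (fderiv ℝ f) x :=
    (hf.fderiv_right (m := 1) le_rfl).differentiableAt one_ne_zero
  have hs := hf.isSymmSndFDerivAt (by rw [minSmoothness_of_isRCLikeNormedField])
  have e : ∀ v w : E3, fderiv ℝ (fun y => fderiv ℝ f y w) x v = fderiv ℝ (fderiv ℝ f) x v w := by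
    intro v w
    rw [fderiv_clm_apply h1 (differentiableAt_const w)]
    simp
  unfold pd3
  rw [e _ _, e _ _, hs]

end aux

/-- The inverse-metric components `g^{μν}` of the elliptic-gauge metric. -/
def ginv7 (n γ b1 b2 : E3 → ℝ) (μ ν : Fin 3) : E3 → ℝ := fun x =>
  !![-(1/(n x)^2), b1 x/(n x)^2, b2 x/(n x)^2;
     b1 x/(n x)^2, Real.exp (-(2*γ x)) - (b1 x)^2/(n x)^2, -(b1 x * b2 x)/(n x)^2;
     b2 x/(n x)^2, -(b1 x * b2 x)/(n x)^2, Real.exp (-(2*γ x)) - (b2 x)^2/(n x)^2] μ ν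

/-- The vector field `e₀ = ∂_t − β¹∂₁ − β²∂₂` acting on functions. -/
def e0op (b1 b2 : E3 → ℝ) (f : E3 → ℝ) : E3 → ℝ :=
  fun x => pd3 0 f x - b1 x * pd3 1 f x - b2 x * pd3 2 f x

/-- The geometric wave operator `□_g h = (n e^{2γ})^{−1} ∑ ∂_α (n e^{2γ} g^{αβ} ∂_β h)`. -/
def boxOp (n γ b1 b2 : E3 → ℝ) (f : E3 → ℝ) : E3 → ℝ := fun x =>
  (n x * Real.exp (2 * γ x))⁻¹ *
    ∑ μ, ∑ ν,
      pd3 μ (fun y => n y * Real.exp (2 * γ y) * ginv7 n γ b1 b2 μ ν y * pd3 ν f y) x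

set_option maxHeartbeats 4000000 in
/-- Coordinate formula for the wave operator in the elliptic gauge, assuming the
gauge identity `2 e₀γ = ∂₁β¹ + ∂₂β²`. -/
theorem stmt7 (Ω : Set E3) (hΩ : IsOpen Ω) (n γ b1 b2 h : E3 → ℝ)
    (hn : ContDiffOn ℝ 2 n Ω) (hγ : ContDiffOn ℝ 2 γ Ω)
    (hb1 : ContDiffOn ℝ 2 b1 Ω) (hb2 : ContDiffOn ℝ 2 b2 Ω)
    (hh : ContDiffOn ℝ 2 h Ω)
    (hpos : ∀ x ∈ Ω, 0 < n x)
    (hgauge : ∀ x ∈ Ω, 2 * e0op b1 b2 γ x = pd3 1 b1 x + pd3 2 b2 x) :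
    ∀ x ∈ Ω,
      boxOp n γ b1 b2 h x =
        -(1/(n x)^2) * e0op b1 b2 (e0op b1 b2 h) x
        + Real.exp (-(2 * γ x)) * (pd3 1 (pd3 1 h) x + pd3 2 (pd3 2 h) x)
        + (e0op b1 b2 n x / (n x)^3) * e0op b1 b2 h x
        + (Real.exp (-(2 * γ x)) / n x) * (pd3 1 n x * pd3 1 h x + pd3 2 n x * pd3 2 h x) := by
  intro x hx
  have hmem : Ω ∈ nhds x := hΩ.mem_nhds hx
  have hxn : n x ≠ 0 := (hpos x hx).ne'
  have cn := hn.contDiffAt hmem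
  have cγ := hγ.contDiffAt hmem
  have cb1 := hb1.contDiffAt hmem
  have cb2 := hb2.contDiffAt hmem
  have ch := hh.contDiffAt hmem
  have dn : DifferentiableAt ℝ n x := cn.differentiableAt two_ne_zero
  have dγ : DifferentiableAt ℝ γ x := cγ.differentiableAt two_ne_zero
  have db1 : DifferentiableAt ℝ b1 x := cb1.differentiableAt two_ne_zero
  have db2 : DifferentiableAt ℝ b2 x := cb2.differentiableAt two_ne_zero
  have dE : DifferentiableAt ℝ (fun y => Real.exp (2 * γ y)) x := (dγ.const_mul 2).exp
  have dI : DifferentiableAt ℝ (fun y => (n y)⁻¹) x := dn.inv hxn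
  have dq : DifferentiableAt ℝ (fun y => Real.exp (2 * γ y) * (n y)⁻¹) x := dE.mul dI
  have dph : ∀ ν : Fin 3, DifferentiableAt ℝ (pd3 ν h) x := fun ν => diff_pd3 ch ν
  have hgx := hgauge x hx
  simp only [e0op] at hgx
  have hc2 : pd3 2 b2 x = 2 * pd3 0 γ x - 2 * (b1 x) * pd3 1 γ x
      - 2 * (b2 x) * pd3 2 γ x - pd3 1 b1 x := by linarith
  have q00 : pd3 0 (fun y => n y * Real.exp (2 * γ y) * ginv7 n γ b1 b2 0 0 y * pd3 0 h y) x
      = pd3 0 (fun y => -(Real.exp (2 * γ y) * (n y)⁻¹ * pd3 0 h y)) x := by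
    refine pd3_congr ?_ 0
    filter_upwards [hmem] with y hy
    have hne : n y ≠ 0 := (hpos y hy).ne'
    have hEy : Real.exp (2 * γ y) ≠ 0 := (Real.exp_pos _).ne'
    simp only [ginv7, Real.exp_neg, Matrix.cons_val_zero, Matrix.cons_val_one, Matrix.head_cons,
      Matrix.head_fin_const, Matrix.cons_val_two, Matrix.tail_cons, Matrix.of_apply,
      Matrix.cons_val']
    field_simp
  have q01 : pd3 0 (fun y => n y * Real.exp (2 * γ y) * ginv7 n γ b1 b2 0 1 y * pd3 1 h y) x
      = pd3 0 (fun y => b1 y * (Real.exp (2 * γ y) * (n y)⁻¹) * pd3 1 h y) x := by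
    refine pd3_congr ?_ 0
    filter_upwards [hmem] with y hy
    have hne : n y ≠ 0 := (hpos y hy).ne'
    have hEy : Real.exp (2 * γ y) ≠ 0 := (Real.exp_pos _).ne'
    simp only [ginv7, Real.exp_neg, Matrix.cons_val_zero, Matrix.cons_val_one, Matrix.head_cons,
      Matrix.head_fin_const, Matrix.cons_val_two, Matrix.tail_cons, Matrix.of_apply,
      Matrix.cons_val']
    field_simp
  have q02 : pd3 0 (fun y => n y * Real.exp (2 * γ y) * ginv7 n γ b1 b2 0 2 y * pd3 2 h y) x
      = pd3 0 (fun y => b2 y * (Real.exp (2 * γ y) * (n y)⁻¹) * pd3 2 h y) x := by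
    refine pd3_congr ?_ 0
    filter_upwards [hmem] with y hy
    have hne : n y ≠ 0 := (hpos y hy).ne'
    have hEy : Real.exp (2 * γ y) ≠ 0 := (Real.exp_pos _).ne'
    simp only [ginv7, Real.exp_neg, Matrix.cons_val_zero, Matrix.cons_val_one, Matrix.head_cons,
      Matrix.head_fin_const, Matrix.cons_val_two, Matrix.tail_cons, Matrix.of_apply,
      Matrix.cons_val']
    field_simp
  have q10 : pd3 1 (fun y => n y * Real.exp (2 * γ y) * ginv7 n γ b1 b2 1 0 y * pd3 0 h y) x
      = pd3 1 (fun y => b1 y * (Real.exp (2 * γ y) * (n y)⁻¹) * pd3 0 h y) x := by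
    refine pd3_congr ?_ 1
    filter_upwards [hmem] with y hy
    have hne : n y ≠ 0 := (hpos y hy).ne'
    have hEy : Real.exp (2 * γ y) ≠ 0 := (Real.exp_pos _).ne'
    simp only [ginv7, Real.exp_neg, Matrix.cons_val_zero, Matrix.cons_val_one, Matrix.head_cons,
      Matrix.head_fin_const, Matrix.cons_val_two, Matrix.tail_cons, Matrix.of_apply,
      Matrix.cons_val']
    field_simp
  have q11 : pd3 1 (fun y => n y * Real.exp (2 * γ y) * ginv7 n γ b1 b2 1 1 y * pd3 1 h y) x
      = pd3 1 (fun y => n y * pd3 1 h y - b1 y * b1 y * (Real.exp (2 * γ y) * (n y)⁻¹) * pd3 1 h y) x := by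
    refine pd3_congr ?_ 1
    filter_upwards [hmem] with y hy
    have hne : n y ≠ 0 := (hpos y hy).ne'
    have hEy : Real.exp (2 * γ y) ≠ 0 := (Real.exp_pos _).ne'
    simp only [ginv7, Real.exp_neg, Matrix.cons_val_zero, Matrix.cons_val_one, Matrix.head_cons,
      Matrix.head_fin_const, Matrix.cons_val_two, Matrix.tail_cons, Matrix.of_apply,
      Matrix.cons_val']
    field_simp
  have q12 : pd3 1 (fun y => n y * Real.exp (2 * γ y) * ginv7 n γ b1 b2 1 2 y * pd3 2 h y) x
      = pd3 1 (fun y => -(b1 y * b2 y * (Real.exp (2 * γ y) * (n y)⁻¹) * pd3 2 h y)) x := by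
    refine pd3_congr ?_ 1
    filter_upwards [hmem] with y hy
    have hne : n y ≠ 0 := (hpos y hy).ne'
    have hEy : Real.exp (2 * γ y) ≠ 0 := (Real.exp_pos _).ne'
    simp only [ginv7, Real.exp_neg, Matrix.cons_val_zero, Matrix.cons_val_one, Matrix.head_cons,
      Matrix.head_fin_const, Matrix.cons_val_two, Matrix.tail_cons, Matrix.of_apply,
      Matrix.cons_val']
    field_simp
  have q20 : pd3 2 (fun y => n y * Real.exp (2 * γ y) * ginv7 n γ b1 b2 2 0 y * pd3 0 h y) x
      = pd3 2 (fun y => b2 y * (Real.exp (2 * γ y) * (n y)⁻¹) * pd3 0 h y) x := by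
    refine pd3_congr ?_ 2
    filter_upwards [hmem] with y hy
    have hne : n y ≠ 0 := (hpos y hy).ne'
    have hEy : Real.exp (2 * γ y) ≠ 0 := (Real.exp_pos _).ne'
    simp only [ginv7, Real.exp_neg, Matrix.cons_val_zero, Matrix.cons_val_one, Matrix.head_cons,
      Matrix.head_fin_const, Matrix.cons_val_two, Matrix.tail_cons, Matrix.of_apply,
      Matrix.cons_val']
    field_simp
  have q21 : pd3 2 (fun y => n y * Real.exp (2 * γ y) * ginv7 n γ b1 b2 2 1 y * pd3 1 h y) x
      = pd3 2 (fun y => -(b1 y * b2 y * (Real.exp (2 * γ y) * (n y)⁻¹) * pd3 1 h y)) x := by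
    refine pd3_congr ?_ 2
    filter_upwards [hmem] with y hy
    have hne : n y ≠ 0 := (hpos y hy).ne'
    have hEy : Real.exp (2 * γ y) ≠ 0 := (Real.exp_pos _).ne'
    simp only [ginv7, Real.exp_neg, Matrix.cons_val_zero, Matrix.cons_val_one, Matrix.head_cons,
      Matrix.head_fin_const, Matrix.cons_val_two, Matrix.tail_cons, Matrix.of_apply,
      Matrix.cons_val']
    field_simp
  have q22 : pd3 2 (fun y => n y * Real.exp (2 * γ y) * ginv7 n γ b1 b2 2 2 y * pd3 2 h y) x
      = pd3 2 (fun y => n y * pd3 2 h y - b2 y * b2 y * (Real.exp (2 * γ y) * (n y)⁻¹) * pd3 2 h y) x := by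
    refine pd3_congr ?_ 2
    filter_upwards [hmem] with y hy
    have hne : n y ≠ 0 := (hpos y hy).ne'
    have hEy : Real.exp (2 * γ y) ≠ 0 := (Real.exp_pos _).ne'
    simp only [ginv7, Real.exp_neg, Matrix.cons_val_zero, Matrix.cons_val_one, Matrix.head_cons,
      Matrix.head_fin_const, Matrix.cons_val_two, Matrix.tail_cons, Matrix.of_apply,
      Matrix.cons_val']
    field_simp
  have he0 : e0op b1 b2 h = fun y => pd3 0 h y - b1 y * pd3 1 h y - b2 y * pd3 2 h y := rfl
  simp only [boxOp, Fin.sum_univ_three, e0op, he0]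
  rw [q00, q01, q02, q10, q11, q12, q20, q21, q22]
  simp only [pd3_neg,
    pd3_sub ((dph 0).fun_sub (db1.fun_mul (dph 1))) (db2.fun_mul (dph 2)),
    pd3_sub (dph 0) (db1.fun_mul (dph 1)),
    pd3_sub (dn.fun_mul (dph 1)) (((db1.fun_mul db1).fun_mul dq).fun_mul (dph 1)),
    pd3_sub (dn.fun_mul (dph 2)) (((db2.fun_mul db2).fun_mul dq).fun_mul (dph 2)),
    pd3_mul dq (dph 0), pd3_mul dn (dph 1), pd3_mul dn (dph 2),
    pd3_mul db1 (dph 1), pd3_mul db2 (dph 2),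
    pd3_mul3 db1 dq (dph 0), pd3_mul3 db1 dq (dph 1),
    pd3_mul3 db2 dq (dph 0), pd3_mul3 db2 dq (dph 2),
    pd3_mul4 db1 db1 dq (dph 1), pd3_mul4 db2 db2 dq (dph 2),
    pd3_mul4 db1 db2 dq (dph 1), pd3_mul4 db1 db2 dq (dph 2),
    pd3_mul dE dI, pd3_exp2 dγ, pd3_inv dn hxn,
    pd3_symm ch 1 0, pd3_symm ch 2 0, pd3_symm ch 2 1]
  rw [hc2]
  simp only [Real.exp_neg]
  have hEx : Real.exp (2 * γ x) ≠ 0 := (Real.exp_pos _).ne'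
  field_simp
  ring


end
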